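/- arXiv:2512.05668 — 3 statements merged into one kernel-verified Lean document; each statement's English description precedes it below -/
import Mathlib

section
/- For every ξ ∈ ℝ^p there exists a real number c ≥ 0 such that the (Bochner) vector integral ∫_S x · exp(⟨ξ, x⟩) dσ(x) equals c • ξ; that is, the first-moment integral of the exponential weight over the sphere is a nonnegative scalar multiple of ξ. Consequently the mean of the von Mises–Fisher distribution, m(ξ) = K(ξ)^{-1} ∫_S x · exp(⟨ξ, x⟩) dσ(x), lies on the ray ℝ_{≥0} · ξ. -/
/-!
The reflection through the line `ℝ ∙ ξ` fixes `ξ` and preserves `σ`, hence fixes the first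
moment `I = ∫ exp ⟪ξ, x⟫ • x ∂σ`; its fixed points are exactly `ℝ ∙ ξ`. The coefficient of `I`
along `ξ` has the sign of `⟪ξ, I⟫`, and symmetrizing under `x ↦ -x` gives
`⟪ξ, I⟫ = ∫ t sinh t ∂σ ≥ 0` with `t = ⟪ξ, x⟫`.
-/

open MeasureTheory Metric
open scoped RealInnerProductSpace ENNReal

/-- The normalising constant of the von Mises–Fisher distribution with natural
parameter `ξ`, relative to the surface measure `σ` on the unit sphere. -/
noncomputable def vmfK {p : ℕ} (σ : Measure (EuclideanSpace ℝ (Fin p)))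
    (ξ : EuclideanSpace ℝ (Fin p)) : ℝ :=
  ∫ x, Real.exp ⟪ξ, x⟫ ∂σ

/-- The von Mises–Fisher density with natural parameter `ξ`. -/
noncomputable def vmfDens {p : ℕ} (σ : Measure (EuclideanSpace ℝ (Fin p)))
    (ξ x : EuclideanSpace ℝ (Fin p)) : ℝ :=
  Real.exp ⟪ξ, x⟫ / vmfK σ ξ

open Real

theorem Real.mul_sinh_nonneg (t : ℝ) : 0 ≤ t * sinh t := by
  rcases le_total 0 t with ht | ht
  · exact mul_nonneg ht (sinh_nonneg_iff.2 ht)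
  · exact mul_nonneg_of_nonpos_of_nonpos ht (sinh_nonpos_iff.2 ht)

section

variable {E : Type*} [NormedAddCommGroup E] [InnerProductSpace ℝ E]

theorem exists_nonneg_smul_of_mem_span_singleton {ξ v : E} (hv : v ∈ ℝ ∙ ξ)
    (h : 0 ≤ ⟪ξ, v⟫) : ∃ c : ℝ, 0 ≤ c ∧ v = c • ξ :=
  ⟨⟪ξ, v⟫ / ‖ξ‖ ^ 2, div_nonneg h (sq_nonneg _),
    (Submodule.starProjection_eq_self_iff.2 hv).symm.trans (Submodule.starProjection_singleton ℝ v)⟩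

variable [CompleteSpace E] [MeasurableSpace E] [BorelSpace E] {μ : Measure E}

theorem LinearIsometryEquiv.apply_integral_of_map_eq (T : E ≃ₗᵢ[ℝ] E) (hT : μ.map T = μ)
    {g : E → E} (hg : ∀ x, g (T x) = T (g x)) : T (∫ x, g x ∂μ) = ∫ x, g x ∂μ :=
  calc T (∫ x, g x ∂μ) = ∫ x, g (T x) ∂μ := by
        simp_rw [hg]; exact (T.toLinearIsometry.integral_comp_comm g).symm
    _ = ∫ x, g x ∂(μ.map T) := (T.toHomeomorph.measurableEmbedding.integral_map g).symm
    _ = ∫ x, g x ∂μ := by rw [hT]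

theorem integral_exp_inner_smul_mem_span (ξ : E) (hμ : μ.map (ℝ ∙ ξ).reflection = μ) :
    ∫ x, exp ⟪ξ, x⟫ • x ∂μ ∈ ℝ ∙ ξ := by
  set R := (ℝ ∙ ξ).reflection
  have hRξ : R ξ = ξ :=
    ((ℝ ∙ ξ).reflection_eq_self_iff ξ).2 (Submodule.mem_span_singleton_self ξ)
  refine ((ℝ ∙ ξ).reflection_eq_self_iff _).1 (R.apply_integral_of_map_eq hμ fun x => ?_)
  have hRinner : ⟪ξ, R x⟫ = ⟪ξ, x⟫ := by simpa [hRξ] using R.inner_map_map (𝕜 := ℝ) ξ x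
  rw [map_smul, hRinner]

theorem inner_integral_exp_inner_smul_nonneg [μ.IsNegInvariant] (ξ : E)
    (hint : Integrable (fun x => exp ⟪ξ, x⟫ • x) μ) : 0 ≤ ⟪ξ, ∫ x, exp ⟪ξ, x⟫ • x ∂μ⟫ := by
  set f : E → ℝ := fun x => exp ⟪ξ, x⟫ * ⟪ξ, x⟫
  have hf : Integrable f μ := by
    simpa [f, real_inner_smul_right, mul_comm] using hint.const_inner (𝕜 := ℝ) ξ
  have hsymm : ∀ x, f x + f (-x) = 2 * (⟪ξ, x⟫ * sinh ⟪ξ, x⟫) := by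
    intro x; simp only [f, inner_neg_right, sinh_eq]; ring
  calc 0 ≤ ∫ x, ⟪ξ, x⟫ * sinh ⟪ξ, x⟫ ∂μ := integral_nonneg fun x => mul_sinh_nonneg _
    _ = (∫ x, f x ∂μ + ∫ x, f (-x) ∂μ) / 2 := by
        rw [← integral_add hf hf.comp_neg]; simp_rw [hsymm]; rw [integral_const_mul]; ring
    _ = ∫ x, f x ∂μ := by rw [integral_neg_eq_self]; ring
    _ = ⟪ξ, ∫ x, exp ⟪ξ, x⟫ • x ∂μ⟫ := by
        rw [← integral_inner hint]; congr 1 with x; exact (real_inner_smul_right _ _ _).symm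

end

theorem vmf_mean_on_ray_general
    (p : ℕ)
    (σ : Measure (EuclideanSpace ℝ (Fin p))) [IsFiniteMeasure σ]
    (hσ : σ (sphere (0 : EuclideanSpace ℝ (Fin p)) 1)ᶜ = 0)
    (hinv : ∀ T : EuclideanSpace ℝ (Fin p) ≃ₗᵢ[ℝ] EuclideanSpace ℝ (Fin p),
      Measure.map T σ = σ)
    (ξ : EuclideanSpace ℝ (Fin p)) :
    (∃ c : ℝ, 0 ≤ c ∧ (∫ x, Real.exp ⟪ξ, x⟫ • x ∂σ) = c • ξ) ∧
    (∃ c' : ℝ, 0 ≤ c' ∧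
      (vmfK σ ξ)⁻¹ • (∫ x, Real.exp ⟪ξ, x⟫ • x ∂σ) = c' • ξ) := by
  have hint : Integrable (fun x => exp ⟪ξ, x⟫ • x) σ := by
    rw [← Measure.restrict_eq_self_of_ae_mem (mem_ae_iff.2 hσ)]
    exact (by fun_prop : Continuous _).continuousOn.integrableOn_compact (isCompact_sphere 0 1)
  have : σ.IsNegInvariant := ⟨hinv (LinearIsometryEquiv.neg ℝ)⟩
  obtain ⟨c, hc, hI⟩ := exists_nonneg_smul_of_mem_span_singleton
    (integral_exp_inner_smul_mem_span ξ (hinv _)) (inner_integral_exp_inner_smul_nonneg ξ hint)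
  have hK : 0 ≤ vmfK σ ξ := integral_nonneg fun x => (exp_pos _).le
  exact ⟨⟨c, hc, hI⟩, ⟨(vmfK σ ξ)⁻¹ * c, mul_nonneg (inv_nonneg.2 hK) hc, by rw [hI, smul_smul]⟩⟩

/-- for a rotation-invariant finite measure `σ` on the unit sphere,
the first-moment integral `∫_S x · exp(⟪ξ,x⟫) dσ(x)` is a nonnegative scalar
multiple of `ξ`; consequently the von Mises–Fisher mean lies on the ray `ℝ₊ ξ`. -/
theorem vmf_mean_on_ray
    (p : ℕ) (hp : 2 ≤ p)
    (σ : Measure (EuclideanSpace ℝ (Fin p))) [IsFiniteMeasure σ]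
    (hσ : σ (sphere (0 : EuclideanSpace ℝ (Fin p)) 1)ᶜ = 0)
    (hinv : ∀ T : EuclideanSpace ℝ (Fin p) ≃ₗᵢ[ℝ] EuclideanSpace ℝ (Fin p),
      Measure.map T σ = σ)
    (hK : ∀ ζ : EuclideanSpace ℝ (Fin p), 0 < vmfK σ ζ)
    (ξ : EuclideanSpace ℝ (Fin p)) :
    (∃ c : ℝ, 0 ≤ c ∧ (∫ x, Real.exp ⟪ξ, x⟫ • x ∂σ) = c • ξ) ∧
    (∃ c' : ℝ, 0 ≤ c' ∧
      (vmfK σ ξ)⁻¹ • (∫ x, Real.exp ⟪ξ, x⟫ • x ∂σ) = c' • ξ) :=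
  vmf_mean_on_ray_general p σ hσ hinv ξ
end

section
/- Fix n ≥ 1, α > 0, y ∈ S, a probability measure G on S with density g with respect to σ, and a measurable prior density π : ℝ^p → [0,∞). Define Q^{(α)}(ξ; μ) = (1/α) ∫_S f_ξ(x)^α dμ(x) − (1/(1+α)) ∫_S f_ξ(x)^{1+α} dσ(x) for finite measures μ on S, k_α(ξ; y, g) = (1/α)( f_ξ(y)^α − ∫_S f_ξ(x)^α g(x) dσ(x) ), F_ε = (1−ε)G + ε δ_y, Z(ε) = ∫_{ℝ^p} exp(n Q^{(α)}(ξ; F_ε)) π(ξ) dξ, N(ε) = ∫_{ℝ^p} ξ · exp(n Q^{(α)}(ξ; F_ε)) π(ξ) dξ, and the density power divergence posterior mean functional T(ε) = N(ε)/Z(ε). Assume Z(0) > 0 and that there exists ε₀ > 0 with ∫_{ℝ^p} (1 + ‖ξ‖)(1 + n|k_α(ξ; y, g)|) · exp( n Q^{(α)}(ξ; G) + ε₀ n |k_α(ξ; y, g)| ) π(ξ) dξ < ∞. Then ε ↦ T(ε) is differentiable at ε = 0 and its derivative (the influence function of the DPD posterior mean) equals n · ( E_π[ξ · k_α(ξ;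 y, g)] − E_π[ξ] · E_π[k_α(ξ; y, g)] ), where E_π denotes expectation with respect to the probability density on ℝ^p proportional to exp(n Q^{(α)}(ξ; G)) π(ξ); i.e. the derivative is n times the posterior covariance of ξ and k_α(ξ; y, g) under the DPD posterior with data-generating distribution G. -/
open MeasureTheory Metric
open scoped RealInnerProductSpace ENNReal

variable {p : ℕ}

lemma aux_integrable (σ : Measure (EuclideanSpace ℝ (Fin p))) [IsFiniteMeasure σ]
    (hσ : σ (sphere (0 : EuclideanSpace ℝ (Fin p)) 1)ᶜ = 0)
    (c : ℝ) (w : EuclideanSpace ℝ (Fin p) → ℝ) (hw0 : ∀ x, 0 ≤ w x)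
    (hw : Integrable w σ) (ζ : EuclideanSpace ℝ (Fin p)) :
    Integrable (fun x => Real.exp (c * ⟪ζ, x⟫) * w x) σ := by
  have hsph : ∀ᵐ x ∂σ, x ∈ sphere (0 : EuclideanSpace ℝ (Fin p)) 1 := by
    rw [MeasureTheory.ae_iff]
    convert hσ using 2
    ext x; simp
  have hcont : Continuous fun x : EuclideanSpace ℝ (Fin p) => Real.exp (c * ⟪ζ, x⟫) :=
    Real.continuous_exp.comp (continuous_const.mul (Continuous.inner continuous_const continuous_id))
  refine (hw.const_mul (Real.exp (|c| * ‖ζ‖))).mono'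
    (hcont.aestronglyMeasurable.mul hw.1) ?_
  filter_upwards [hsph] with x hx
  have hx1 : ‖x‖ = 1 := by simpa [mem_sphere_iff_norm] using hx
  have h1 : c * ⟪ζ, x⟫ ≤ |c| * ‖ζ‖ := by
    calc c * ⟪ζ, x⟫ ≤ |c * ⟪ζ, x⟫| := le_abs_self _
    _ = |c| * |⟪ζ, x⟫| := abs_mul _ _
    _ ≤ |c| * (‖ζ‖ * ‖x‖) := by
        exact mul_le_mul_of_nonneg_left (abs_real_inner_le_norm ζ x) (abs_nonneg c)
    _ = |c| * ‖ζ‖ := by rw [hx1, mul_one]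
  have : ‖Real.exp (c * ⟪ζ, x⟫) * w x‖ = Real.exp (c * ⟪ζ, x⟫) * w x := by
    rw [Real.norm_eq_abs, abs_of_nonneg (mul_nonneg (Real.exp_pos _).le (hw0 x))]
  rw [this]
  exact mul_le_mul_of_nonneg_right (Real.exp_le_exp.2 h1) (hw0 x)

lemma aux_continuous (σ : Measure (EuclideanSpace ℝ (Fin p))) [IsFiniteMeasure σ]
    (hσ : σ (sphere (0 : EuclideanSpace ℝ (Fin p)) 1)ᶜ = 0)
    (c : ℝ) (w : EuclideanSpace ℝ (Fin p) → ℝ) (hw0 : ∀ x, 0 ≤ w x)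
    (hw : Integrable w σ) :
    Continuous (fun ζ : EuclideanSpace ℝ (Fin p) => ∫ x, Real.exp (c * ⟪ζ, x⟫) * w x ∂σ) := by
  have hsph : ∀ᵐ x ∂σ, x ∈ sphere (0 : EuclideanSpace ℝ (Fin p)) 1 := by
    rw [MeasureTheory.ae_iff]
    convert hσ using 2
    ext x; simp
  rw [continuous_iff_continuousAt]
  intro ζ₀
  refine continuousAt_of_dominated (bound := fun x => Real.exp (|c| * (‖ζ₀‖ + 1)) * w x)
    ?_ ?_ (hw.const_mul _) ?_
  · filter_upwards with ζ
    have hcont : Continuous fun x : EuclideanSpace ℝ (Fin p) => Real.exp (c * ⟪ζ, x⟫) :=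
      Real.continuous_exp.comp (continuous_const.mul (Continuous.inner continuous_const continuous_id))
    exact hcont.aestronglyMeasurable.mul hw.1
  · filter_upwards [Metric.ball_mem_nhds ζ₀ one_pos] with ζ hζ
    filter_upwards [hsph] with x hx
    have hx1 : ‖x‖ = 1 := by simpa [mem_sphere_iff_norm] using hx
    have hζn : ‖ζ‖ ≤ ‖ζ₀‖ + 1 := by
      have := mem_ball_iff_norm.1 hζ
      have h2 : ‖ζ‖ - ‖ζ₀‖ ≤ ‖ζ - ζ₀‖ := norm_sub_norm_le ζ ζ₀
      linarith
    have h1 : c * ⟪ζ, x⟫ ≤ |c| * (‖ζ₀‖ + 1) := by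
      calc c * ⟪ζ, x⟫ ≤ |c * ⟪ζ, x⟫| := le_abs_self _
      _ = |c| * |⟪ζ, x⟫| := abs_mul _ _
      _ ≤ |c| * (‖ζ‖ * ‖x‖) :=
          mul_le_mul_of_nonneg_left (abs_real_inner_le_norm ζ x) (abs_nonneg c)
      _ ≤ |c| * (‖ζ₀‖ + 1) := by
          rw [hx1, mul_one]
          exact mul_le_mul_of_nonneg_left hζn (abs_nonneg c)
    have : ‖Real.exp (c * ⟪ζ, x⟫) * w x‖ = Real.exp (c * ⟪ζ, x⟫) * w x := by
      rw [Real.norm_eq_abs, abs_of_nonneg (mul_nonneg (Real.exp_pos _).le (hw0 x))]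
    rw [this]
    exact mul_le_mul_of_nonneg_right (Real.exp_le_exp.2 h1) (hw0 x)
  · filter_upwards with x
    exact ((Real.continuous_exp.comp (continuous_const.mul
      (Continuous.inner continuous_id continuous_const))).continuousAt).mul continuousAt_const


/-- influence function of the DPD posterior mean functional: under
the stated domination condition, `T(ε) = N(ε)/Z(ε)` is differentiable at `ε = 0`
(within `[0,1]`) with derivative `n·Cov_π(ξ, k_α(ξ; y, g))`. -/
theorem dpd_posterior_mean_influence
    (p : ℕ) (hp : 2 ≤ p)
    (σ : Measure (EuclideanSpace ℝ (Fin p))) [IsFiniteMeasure σ]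
    (hσ : σ (sphere (0 : EuclideanSpace ℝ (Fin p)) 1)ᶜ = 0)
    (hK : ∀ ζ : EuclideanSpace ℝ (Fin p), 0 < vmfK σ ζ)
    (n : ℕ) (hn : 1 ≤ n) (α : ℝ) (hα : 0 < α)
    (y : EuclideanSpace ℝ (Fin p)) (hy : y ∈ sphere (0 : EuclideanSpace ℝ (Fin p)) 1)
    (g : EuclideanSpace ℝ (Fin p) → ℝ) (hg0 : ∀ x, 0 ≤ g x) (hgmeas : Measurable g)
    (G : Measure (EuclideanSpace ℝ (Fin p))) [IsProbabilityMeasure G]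
    (hG : G = σ.withDensity fun x => ENNReal.ofReal (g x))
    (prior : EuclideanSpace ℝ (Fin p) → ℝ)
    (hprior_meas : Measurable prior) (hprior0 : ∀ ζ, 0 ≤ prior ζ)
    (Q : EuclideanSpace ℝ (Fin p) → Measure (EuclideanSpace ℝ (Fin p)) → ℝ)
    (hQ : ∀ ζ μ, Q ζ μ = (1/α) * (∫ x, vmfDens σ ζ x ^ α ∂μ)
        - (1/(1+α)) * ∫ x, vmfDens σ ζ x ^ (1+α) ∂σ)
    (k : EuclideanSpace ℝ (Fin p) → ℝ)
    (hk : ∀ ζ, k ζ = (1/α) * (vmfDens σ ζ y ^ α - ∫ x, vmfDens σ ζ x ^ α * g x ∂σ))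
    (F : ℝ → Measure (EuclideanSpace ℝ (Fin p)))
    (hF : ∀ ε, F ε = ENNReal.ofReal (1-ε) • G + ENNReal.ofReal ε • Measure.dirac y)
    (Z : ℝ → ℝ)
    (hZ : ∀ ε, Z ε = ∫ ζ, Real.exp ((n : ℝ) * Q ζ (F ε)) * prior ζ)
    (N : ℝ → EuclideanSpace ℝ (Fin p))
    (hN : ∀ ε, N ε = ∫ ζ, (Real.exp ((n : ℝ) * Q ζ (F ε)) * prior ζ) • ζ)
    (T : ℝ → EuclideanSpace ℝ (Fin p))
    (hT : ∀ ε, T ε = (Z ε)⁻¹ • N ε)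
    (hZ0 : 0 < Z 0)
    (ε₀ : ℝ) (hε₀ : 0 < ε₀)
    (hdom : Integrable (fun ζ : EuclideanSpace ℝ (Fin p) =>
      (1 + ‖ζ‖) * (1 + (n : ℝ) * |k ζ|)
        * Real.exp ((n : ℝ) * Q ζ G + ε₀ * (n : ℝ) * |k ζ|) * prior ζ)) :
    HasDerivWithinAt T
      ((n : ℝ) • (((Z 0)⁻¹ •
          ∫ ζ, (Real.exp ((n : ℝ) * Q ζ G) * prior ζ * k ζ) • ζ)
        - ((Z 0)⁻¹ * ∫ ζ, Real.exp ((n : ℝ) * Q ζ G) * prior ζ * k ζ) •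
            ((Z 0)⁻¹ • ∫ ζ, (Real.exp ((n : ℝ) * Q ζ G) * prior ζ) • ζ)))
      (Set.Icc (0:ℝ) 1) 0 := by
  classical
  -- basic facts
  have hg_int : Integrable g σ := by
    have h1 : ∫⁻ x, ENNReal.ofReal (g x) ∂σ = 1 := by
      have := measure_univ (μ := G)
      rw [hG, withDensity_apply _ MeasurableSet.univ, Measure.restrict_univ] at this
      exact this
    refine ⟨hgmeas.aestronglyMeasurable, ?_⟩
    rw [MeasureTheory.hasFiniteIntegral_iff_norm]
    have : ∀ x, ENNReal.ofReal ‖g x‖ = ENNReal.ofReal (g x) := by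
      intro x; rw [Real.norm_eq_abs, abs_of_nonneg (hg0 x)]
    simp_rw [this, h1]
    exact ENNReal.one_lt_top
  have hGsph : G (sphere (0 : EuclideanSpace ℝ (Fin p)) 1)ᶜ = 0 := by
    rw [hG, withDensity_apply _ (isClosed_sphere.measurableSet.compl)]
    rw [Measure.restrict_eq_zero.2 hσ]
    simp
  -- continuity of vmfK
  have hKcont : Continuous (vmfK σ) := by
    have : vmfK σ = fun ζ => ∫ x, Real.exp (1 * ⟪ζ, x⟫) * (1 : ℝ) ∂σ := by
      funext ζ; simp [vmfK]
    rw [this]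
    exact aux_continuous σ hσ 1 (fun _ => (1:ℝ)) (fun _ => zero_le_one) (integrable_const 1)
  have hKne : ∀ ζ : EuclideanSpace ℝ (Fin p), vmfK σ ζ ≠ 0 := fun ζ => (hK ζ).ne'
  -- pointwise power formula
  have hdens_pow : ∀ (r : ℝ) (ζ x : EuclideanSpace ℝ (Fin p)),
      vmfDens σ ζ x ^ r = (vmfK σ ζ) ^ (-r) * Real.exp (r * ⟪ζ, x⟫) := by
    intro r ζ x
    rw [vmfDens, Real.div_rpow (Real.exp_pos _).le (hK ζ).le, Real.rpow_neg (hK ζ).le,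
      ← Real.exp_mul, div_eq_mul_inv, mul_comm (Real.exp _), mul_comm (⟪ζ,x⟫) r]
  -- withDensity conversion
  have hGconv : ∀ h : EuclideanSpace ℝ (Fin p) → ℝ, ∫ x, h x ∂G = ∫ x, g x * h x ∂σ := by
    intro h
    rw [hG]
    have hone : (fun x => ENNReal.ofReal (g x)) = fun x => ((g x).toNNReal : ℝ≥0∞) := rfl
    have hmeas : AEMeasurable (fun x : EuclideanSpace ℝ (Fin p) => (g x).toNNReal) σ :=
      (measurable_real_toNNReal.comp hgmeas).aemeasurable
    rw [hone, integral_withDensity_eq_integral_smul₀ hmeas h]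
    refine integral_congr_ae (Filter.Eventually.of_forall fun x => ?_)
    simp [NNReal.smul_def, Real.coe_toNNReal _ (hg0 x)]
  -- key integrals
  set Wg : EuclideanSpace ℝ (Fin p) → ℝ := fun ζ => ∫ x, Real.exp (α * ⟪ζ, x⟫) * g x ∂σ with hWg
  set WB : EuclideanSpace ℝ (Fin p) → ℝ := fun ζ => ∫ x, Real.exp ((1+α) * ⟪ζ, x⟫) * (1:ℝ) ∂σ with hWB
  have hWgcont : Continuous Wg := aux_continuous σ hσ α g hg0 hg_int
  have hWBcont : Continuous WB :=
    aux_continuous σ hσ (1+α) (fun _ => 1) (fun _ => zero_le_one) (integrable_const 1)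
  have hIGσ : ∀ ζ : EuclideanSpace ℝ (Fin p), ∫ x, vmfDens σ ζ x ^ α * g x ∂σ = (vmfK σ ζ) ^ (-α) * Wg ζ := by
    intro ζ
    simp_rw [hdens_pow α ζ, mul_assoc]
    rw [integral_const_mul]
  have hIG : ∀ ζ : EuclideanSpace ℝ (Fin p), ∫ x, vmfDens σ ζ x ^ α ∂G = (vmfK σ ζ) ^ (-α) * Wg ζ := by
    intro ζ
    rw [hGconv, ← hIGσ ζ]
    refine integral_congr_ae (Filter.Eventually.of_forall fun x => ?_)
    ring
  have hB : ∀ ζ : EuclideanSpace ℝ (Fin p), ∫ x, vmfDens σ ζ x ^ (1+α) ∂σ = (vmfK σ ζ) ^ (-(1+α)) * WB ζ := by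
    intro ζ
    simp_rw [hdens_pow (1+α) ζ]
    rw [hWB]
    simp_rw [mul_one]
    rw [integral_const_mul]
  -- expressions for Q · G and k
  have hQGexpr : ∀ ζ : EuclideanSpace ℝ (Fin p), Q ζ G
      = (1/α) * ((vmfK σ ζ) ^ (-α) * Wg ζ) - (1/(1+α)) * ((vmfK σ ζ) ^ (-(1+α)) * WB ζ) := by
    intro ζ; rw [hQ, hIG, hB]
  have hkexpr : ∀ ζ : EuclideanSpace ℝ (Fin p), k ζ
      = (1/α) * ((vmfK σ ζ) ^ (-α) * Real.exp (α * ⟪ζ, y⟫) - (vmfK σ ζ) ^ (-α) * Wg ζ) := by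
    intro ζ; rw [hk, hdens_pow α ζ y, hIGσ]
  have hKpow : ∀ r : ℝ, Continuous fun ζ : EuclideanSpace ℝ (Fin p) => (vmfK σ ζ) ^ r := by
    intro r
    exact hKcont.rpow_const (fun ζ => Or.inl (hKne ζ))
  have hinnery : Continuous fun ζ : EuclideanSpace ℝ (Fin p) => Real.exp (α * ⟪ζ, y⟫) :=
    Real.continuous_exp.comp (continuous_const.mul
      (Continuous.inner continuous_id continuous_const))
  have hQGcont : Continuous fun ζ : EuclideanSpace ℝ (Fin p) => Q ζ G := by
    have : (fun ζ : EuclideanSpace ℝ (Fin p) => Q ζ G) = fun ζ =>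
        (1/α) * ((vmfK σ ζ) ^ (-α) * Wg ζ) - (1/(1+α)) * ((vmfK σ ζ) ^ (-(1+α)) * WB ζ) :=
      funext hQGexpr
    rw [this]
    exact (continuous_const.mul ((hKpow (-α)).mul hWgcont)).sub
      (continuous_const.mul ((hKpow (-(1+α))).mul hWBcont))
  have hkcont : Continuous k := by
    have : k = fun ζ =>
        (1/α) * ((vmfK σ ζ) ^ (-α) * Real.exp (α * ⟪ζ, y⟫) - (vmfK σ ζ) ^ (-α) * Wg ζ) :=
      funext hkexpr
    rw [this]
    exact continuous_const.mul (((hKpow (-α)).mul hinnery).sub ((hKpow (-α)).mul hWgcont))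
  -- integrability of the α-power of the density
  have hdenscont : ∀ ζ : EuclideanSpace ℝ (Fin p),
      Continuous fun x : EuclideanSpace ℝ (Fin p) => vmfDens σ ζ x ^ α := by
    intro ζ
    have h1 : Continuous fun x : EuclideanSpace ℝ (Fin p) => vmfDens σ ζ x := by
      unfold vmfDens
      exact (Real.continuous_exp.comp (Continuous.inner continuous_const continuous_id)).div_const _
    exact h1.rpow_const fun x => Or.inl (ne_of_gt (div_pos (Real.exp_pos _) (hK ζ)))
  have hfα_intG : ∀ ζ : EuclideanSpace ℝ (Fin p),
      Integrable (fun x => vmfDens σ ζ x ^ α) G := by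
    intro ζ
    have h2 : Integrable (fun x => Real.exp (α * ⟪ζ, x⟫) * (1:ℝ)) G :=
      aux_integrable G hGsph α (fun _ => 1) (fun _ => zero_le_one) (integrable_const 1) ζ
    have h3 := (h2.const_mul ((vmfK σ ζ) ^ (-α)))
    refine h3.congr (Filter.Eventually.of_forall fun x => ?_)
    simp only [hdens_pow α ζ]
    ring
  have hfα_intD : ∀ ζ : EuclideanSpace ℝ (Fin p),
      Integrable (fun x => vmfDens σ ζ x ^ α) (Measure.dirac y) := by
    intro ζ
    refine Integrable.congr (integrable_const (vmfDens σ ζ y ^ α)) ?_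
    exact (ae_eq_dirac' (hdenscont ζ).measurable).symm
  -- key identity : Q ζ (F ε) = Q ζ G + ε * k ζ on [0,1]
  have hQF : ∀ ε ∈ Set.Icc (0:ℝ) 1, ∀ ζ : EuclideanSpace ℝ (Fin p),
      Q ζ (F ε) = Q ζ G + ε * k ζ := by
    rintro ε ⟨hε0, hε1⟩ ζ
    have hint : ∫ x, vmfDens σ ζ x ^ α ∂(F ε)
        = (1-ε) * ∫ x, vmfDens σ ζ x ^ α ∂G + ε * vmfDens σ ζ y ^ α := by
      rw [hF]
      rw [integral_add_measure ((hfα_intG ζ).smul_measure ENNReal.ofReal_ne_top)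
        ((hfα_intD ζ).smul_measure ENNReal.ofReal_ne_top)]
      rw [integral_smul_measure, integral_smul_measure,
        ENNReal.toReal_ofReal (by linarith), ENNReal.toReal_ofReal hε0,
        integral_dirac' _ y (hdenscont ζ).stronglyMeasurable]
      simp [smul_eq_mul]
    rw [hQ ζ (F ε), hint, hQ ζ G, hk ζ, hIGσ, hIG]
    ring
  -- parametric family
  set Fb : ℝ → EuclideanSpace ℝ (Fin p) → ℝ :=
    fun ε ζ => Real.exp ((n:ℝ) * Q ζ G + ε * ((n:ℝ) * k ζ)) * prior ζ with hFb
  set Fb' : ℝ → EuclideanSpace ℝ (Fin p) → ℝ :=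
    fun ε ζ => ((n:ℝ) * k ζ) * (Real.exp ((n:ℝ) * Q ζ G + ε * ((n:ℝ) * k ζ)) * prior ζ) with hFb'
  set bnd : EuclideanSpace ℝ (Fin p) → ℝ :=
    fun ζ => (1 + ‖ζ‖) * (1 + (n:ℝ) * |k ζ|)
      * Real.exp ((n:ℝ) * Q ζ G + ε₀ * (n:ℝ) * |k ζ|) * prior ζ with hbnd
  -- master bound
  have hmaster : ∀ (c ε : ℝ) (ζ : EuclideanSpace ℝ (Fin p)), |ε| ≤ ε₀ → 0 ≤ c →
      c ≤ (1 + ‖ζ‖) * (1 + (n:ℝ) * |k ζ|) →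
      c * (Real.exp ((n:ℝ) * Q ζ G + ε * ((n:ℝ) * k ζ)) * prior ζ) ≤ bnd ζ := by
    intro c ε ζ hε hc hcle
    have hexp : Real.exp ((n:ℝ) * Q ζ G + ε * ((n:ℝ) * k ζ))
        ≤ Real.exp ((n:ℝ) * Q ζ G + ε₀ * (n:ℝ) * |k ζ|) := by
      apply Real.exp_le_exp.2
      have h1 : ε * ((n:ℝ) * k ζ) ≤ |ε * ((n:ℝ) * k ζ)| := le_abs_self _
      have h2 : |ε * ((n:ℝ) * k ζ)| = |ε| * ((n:ℝ) * |k ζ|) := by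
        rw [abs_mul, abs_mul, Nat.abs_cast]
      have h3 : |ε| * ((n:ℝ) * |k ζ|) ≤ ε₀ * ((n:ℝ) * |k ζ|) :=
        mul_le_mul_of_nonneg_right hε (by positivity)
      nlinarith
    calc c * (Real.exp ((n:ℝ) * Q ζ G + ε * ((n:ℝ) * k ζ)) * prior ζ)
        ≤ c * (Real.exp ((n:ℝ) * Q ζ G + ε₀ * (n:ℝ) * |k ζ|) * prior ζ) :=
          mul_le_mul_of_nonneg_left
            (mul_le_mul_of_nonneg_right hexp (hprior0 ζ)) hc
      _ ≤ ((1 + ‖ζ‖) * (1 + (n:ℝ) * |k ζ|))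
            * (Real.exp ((n:ℝ) * Q ζ G + ε₀ * (n:ℝ) * |k ζ|) * prior ζ) :=
          mul_le_mul_of_nonneg_right hcle (mul_nonneg (Real.exp_pos _).le (hprior0 ζ))
      _ = bnd ζ := by rw [hbnd]; ring
  have hcle1 : ∀ ζ : EuclideanSpace ℝ (Fin p), (1:ℝ) ≤ (1 + ‖ζ‖) * (1 + (n:ℝ) * |k ζ|) := by
    intro ζ
    nlinarith [norm_nonneg ζ, abs_nonneg (k ζ), mul_nonneg (norm_nonneg ζ) (mul_nonneg (Nat.cast_nonneg (α := ℝ) n) (abs_nonneg (k ζ))), Nat.cast_nonneg (α := ℝ) n, mul_nonneg (Nat.cast_nonneg (α := ℝ) n) (abs_nonneg (k ζ))]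
  have hclen : ∀ ζ : EuclideanSpace ℝ (Fin p), ‖ζ‖ ≤ (1 + ‖ζ‖) * (1 + (n:ℝ) * |k ζ|) := by
    intro ζ
    nlinarith [norm_nonneg ζ, mul_nonneg (norm_nonneg ζ) (mul_nonneg (Nat.cast_nonneg (α := ℝ) n) (abs_nonneg (k ζ))), mul_nonneg (Nat.cast_nonneg (α := ℝ) n) (abs_nonneg (k ζ))]
  have hclek : ∀ ζ : EuclideanSpace ℝ (Fin p),
      (n:ℝ) * |k ζ| ≤ (1 + ‖ζ‖) * (1 + (n:ℝ) * |k ζ|) := by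
    intro ζ
    nlinarith [norm_nonneg ζ, mul_nonneg (norm_nonneg ζ) (mul_nonneg (Nat.cast_nonneg (α := ℝ) n) (abs_nonneg (k ζ))), mul_nonneg (Nat.cast_nonneg (α := ℝ) n) (abs_nonneg (k ζ))]
  have hclekn : ∀ ζ : EuclideanSpace ℝ (Fin p),
      ((n:ℝ) * |k ζ|) * ‖ζ‖ ≤ (1 + ‖ζ‖) * (1 + (n:ℝ) * |k ζ|) := by
    intro ζ
    nlinarith [norm_nonneg ζ, mul_nonneg (norm_nonneg ζ) (mul_nonneg (Nat.cast_nonneg (α := ℝ) n) (abs_nonneg (k ζ))), mul_nonneg (Nat.cast_nonneg (α := ℝ) n) (abs_nonneg (k ζ))]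
  -- measurability
  have hFbcont : ∀ ε : ℝ, Continuous fun ζ : EuclideanSpace ℝ (Fin p) =>
      Real.exp ((n:ℝ) * Q ζ G + ε * ((n:ℝ) * k ζ)) :=
    fun ε => Real.continuous_exp.comp
      ((continuous_const.mul hQGcont).add (continuous_const.mul (continuous_const.mul hkcont)))
  have hmeasF : ∀ ε : ℝ, AEStronglyMeasurable (Fb ε) (volume : Measure (EuclideanSpace ℝ (Fin p))) :=
    fun ε => (hFbcont ε).aestronglyMeasurable.mul hprior_meas.aestronglyMeasurable
  have hmeasF' : ∀ ε : ℝ, AEStronglyMeasurable (Fb' ε) (volume : Measure (EuclideanSpace ℝ (Fin p))) :=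
    fun ε => ((continuous_const.mul hkcont).aestronglyMeasurable).mul (hmeasF ε)
  have hFb0 : ∀ (ε : ℝ) (ζ : EuclideanSpace ℝ (Fin p)), 0 ≤ Fb ε ζ := by
    intro ε ζ
    exact mul_nonneg (Real.exp_pos _).le (hprior0 ζ)
  have habsF' : ∀ (ε : ℝ) (ζ : EuclideanSpace ℝ (Fin p)),
      ‖Fb' ε ζ‖ = ((n:ℝ) * |k ζ|) * (Real.exp ((n:ℝ) * Q ζ G + ε * ((n:ℝ) * k ζ)) * prior ζ) := by
    intro ε ζ
    simp only [hFb']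
    rw [Real.norm_eq_abs, abs_mul, abs_mul, Nat.abs_cast,
      abs_of_nonneg (mul_nonneg (Real.exp_pos _).le (hprior0 ζ))]
  -- integrability of Fb 0 and the vector analogue
  have hintF0 : Integrable (Fb 0) (volume : Measure (EuclideanSpace ℝ (Fin p))) := by
    refine hdom.mono' (hmeasF 0) (Filter.Eventually.of_forall fun ζ => ?_)
    rw [Real.norm_eq_abs, abs_of_nonneg (hFb0 0 ζ)]
    have := hmaster 1 0 ζ (by simpa using hε₀.le) zero_le_one (hcle1 ζ)
    rw [one_mul] at this
    exact this
  have hintF0v : Integrable (fun ζ : EuclideanSpace ℝ (Fin p) => Fb 0 ζ • ζ)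
      (volume : Measure (EuclideanSpace ℝ (Fin p))) := by
    refine hdom.mono' ((hmeasF 0).smul aestronglyMeasurable_id) (Filter.Eventually.of_forall fun ζ => ?_)
    rw [norm_smul, Real.norm_eq_abs, abs_of_nonneg (hFb0 0 ζ)]
    have := hmaster ‖ζ‖ 0 ζ (by simpa using hε₀.le) (norm_nonneg ζ) (hclen ζ)
    calc Fb 0 ζ * ‖ζ‖ = ‖ζ‖ * (Real.exp ((n:ℝ) * Q ζ G + 0 * ((n:ℝ) * k ζ)) * prior ζ) := by
          rw [hFb]; ring
      _ ≤ bnd ζ := this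
  -- pointwise derivative
  have hderiv_pt : ∀ (ζ : EuclideanSpace ℝ (Fin p)) (ε : ℝ),
      HasDerivAt (fun e => Fb e ζ) (Fb' ε ζ) ε := by
    intro ζ ε
    have h1 : HasDerivAt (fun e : ℝ => (n:ℝ) * Q ζ G + e * ((n:ℝ) * k ζ)) ((n:ℝ) * k ζ) ε :=
      (hasDerivAt_mul_const ((n:ℝ) * k ζ)).const_add ((n:ℝ) * Q ζ G)
    have h2 := (h1.exp).mul_const (prior ζ)
    refine h2.congr_deriv ?_
    simp only [hFb']
    ring
  -- scalar derivative
  obtain ⟨hintF'0, hDZ⟩ := hasDerivAt_integral_of_dominated_loc_of_deriv_le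
    (μ := (volume : Measure (EuclideanSpace ℝ (Fin p)))) (F := Fb) (F' := Fb') (x₀ := 0)
    (bound := bnd) (ball_mem_nhds 0 hε₀)
    (Filter.Eventually.of_forall hmeasF) hintF0 (hmeasF' 0)
    (Filter.Eventually.of_forall fun ζ => fun ε hε => by
      rw [habsF']
      exact hmaster _ ε ζ (le_of_lt (by simpa [Real.norm_eq_abs] using mem_ball_zero_iff.1 hε))
        (by positivity) (hclek ζ))
    hdom
    (Filter.Eventually.of_forall fun ζ => fun ε _ => hderiv_pt ζ ε)
  -- vector derivative
  obtain ⟨hintF'0v, hDN⟩ := hasDerivAt_integral_of_dominated_loc_of_deriv_le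
    (μ := (volume : Measure (EuclideanSpace ℝ (Fin p))))
    (F := fun ε ζ => Fb ε ζ • ζ) (F' := fun ε ζ => Fb' ε ζ • ζ) (x₀ := 0)
    (bound := bnd) (ball_mem_nhds 0 hε₀)
    (Filter.Eventually.of_forall fun ε => (hmeasF ε).smul aestronglyMeasurable_id)
    hintF0v ((hmeasF' 0).smul aestronglyMeasurable_id)
    (Filter.Eventually.of_forall fun ζ => fun ε hε => by
      rw [norm_smul, habsF']
      calc ((n:ℝ) * |k ζ|) * (Real.exp ((n:ℝ) * Q ζ G + ε * ((n:ℝ) * k ζ)) * prior ζ) * ‖ζ‖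
          = (((n:ℝ) * |k ζ|) * ‖ζ‖)
            * (Real.exp ((n:ℝ) * Q ζ G + ε * ((n:ℝ) * k ζ)) * prior ζ) := by ring
        _ ≤ bnd ζ := hmaster _ ε ζ
            (le_of_lt (by simpa [Real.norm_eq_abs] using mem_ball_zero_iff.1 hε))
            (by positivity) (hclekn ζ))
    hdom
    (Filter.Eventually.of_forall fun ζ => fun ε _ => (hderiv_pt ζ ε).smul_const ζ)
  -- identify Z, N with the parametric integrals on [0,1]
  have hZeq : ∀ ε ∈ Set.Icc (0:ℝ) 1, Z ε = ∫ ζ, Fb ε ζ := by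
    intro ε hε
    rw [hZ]
    congr 1
    funext ζ
    rw [hQF ε hε ζ]
    simp only [hFb]
    congr 1
    ring
  have hNeq : ∀ ε ∈ Set.Icc (0:ℝ) 1, N ε = ∫ ζ, Fb ε ζ • ζ := by
    intro ε hε
    rw [hN]
    congr 1
    funext ζ
    rw [hQF ε hε ζ]
    simp only [hFb]
    congr 2
    ring
  have h0mem : (0:ℝ) ∈ Set.Icc (0:ℝ) 1 := ⟨le_refl 0, zero_le_one⟩
  have hZder : HasDerivWithinAt Z (∫ ζ, Fb' 0 ζ) (Set.Icc (0:ℝ) 1) 0 :=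
    (hDZ.hasDerivWithinAt).congr hZeq (hZeq 0 h0mem)
  have hNder : HasDerivWithinAt N (∫ ζ, Fb' 0 ζ • ζ) (Set.Icc (0:ℝ) 1) 0 :=
    (hDN.hasDerivWithinAt).congr hNeq (hNeq 0 h0mem)
  -- assemble
  have hTeq : T = fun ε => (Z ε)⁻¹ • N ε := funext hT
  rw [hTeq]
  have hfinal := (hZder.inv hZ0.ne').smul hNder
  -- identify the integrals
  have hz'A : ∫ ζ, Fb' 0 ζ = (n:ℝ) * ∫ ζ, Real.exp ((n:ℝ) * Q ζ G) * prior ζ * k ζ := by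
    rw [← integral_const_mul]
    congr 1
    funext ζ
    simp only [hFb', zero_mul, add_zero]
    ring
  have hn'B : ∫ ζ, Fb' 0 ζ • ζ
      = (n:ℝ) • ∫ ζ, (Real.exp ((n:ℝ) * Q ζ G) * prior ζ * k ζ) • ζ := by
    rw [← integral_smul]
    congr 1
    funext ζ
    simp only [hFb', zero_mul, add_zero]
    rw [← mul_smul]
    congr 1
    ring
  have hN0 : N 0 = ∫ ζ, (Real.exp ((n:ℝ) * Q ζ G) * prior ζ) • ζ := by
    rw [hNeq 0 h0mem]
    congr 1
    funext ζ
    simp only [hFb, zero_mul, add_zero]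
  rw [hz'A, hn'B, hN0] at hfinal
  refine hfinal.congr_deriv ?_
  rw [div_eq_mul_inv, sq, mul_inv]
  module
end

section
/- Fix n ≥ 1, γ > 0, y ∈ S, a probability measure G on S with density g with respect to σ, and a measurable prior density π : ℝ^p → [0,∞). Define C_{ξ,γ} = ( ∫_S f_ξ(x)^{1+γ} dσ(x) )^{−γ/(1+γ)}, Q^{(γ)}(ξ; μ) = (1/γ) ( ∫_S f_ξ(x)^γ dμ(x) ) · C_{ξ,γ} for finite measures μ on S, k_γ(ξ; y, g) = (1/γ)( f_ξ(y)^γ − ∫_S f_ξ(x)^γ g(x) dσ(x) ) · C_{ξ,γ}, F_ε = (1−ε)G + ε δ_y, Z(ε) = ∫_{ℝ^p} exp(n Q^{(γ)}(ξ; F_ε)) π(ξ) dξ, N(ε) = ∫_{ℝ^p} ξ · exp(n Q^{(γ)}(ξ; F_ε)) π(ξ) dξ, and the γ-divergence posterior mean functional T(ε) = N(ε)/Z(ε). Assume Z(0) > 0 and that there exists ε₀ > 0 with ∫_{ℝ^p} (1 + ‖ξ‖)(1 + n|k_γ(ξ; y, g)|) · exp( n Q^{(γ)}(ξ; G) + ε₀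 n |k_γ(ξ; y, g)| ) π(ξ) dξ < ∞. Then ε ↦ T(ε) is differentiable at ε = 0 and its derivative (the influence function of the γ-D posterior mean) equals n · ( E_π[ξ · k_γ(ξ; y, g)] − E_π[ξ] · E_π[k_γ(ξ; y, g)] ), where E_π denotes expectation with respect to the probability density on ℝ^p proportional to exp(n Q^{(γ)}(ξ; G)) π(ξ); i.e. the derivative is n times the posterior covariance of ξ and k_γ(ξ; y, g) under the γ-D posterior with data-generating distribution G. -/
open MeasureTheory Metric
open scoped RealInnerProductSpace ENNReal

/-- influence function of the γ-divergence posterior mean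
functional: under the stated domination condition, `T(ε) = N(ε)/Z(ε)` is
differentiable at `ε = 0` (within `[0,1]`) with derivative
`n·Cov_π(ξ, k_γ(ξ; y, g))`. -/
theorem gammaD_posterior_mean_influence
    (p : ℕ) (hp : 2 ≤ p)
    (σ : Measure (EuclideanSpace ℝ (Fin p))) [IsFiniteMeasure σ]
    (hσ : σ (sphere (0 : EuclideanSpace ℝ (Fin p)) 1)ᶜ = 0)
    (hK : ∀ ζ : EuclideanSpace ℝ (Fin p), 0 < vmfK σ ζ)
    (n : ℕ) (hn : 1 ≤ n) (γ : ℝ) (hγ : 0 < γ)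
    (y : EuclideanSpace ℝ (Fin p)) (hy : y ∈ sphere (0 : EuclideanSpace ℝ (Fin p)) 1)
    (g : EuclideanSpace ℝ (Fin p) → ℝ) (hg0 : ∀ x, 0 ≤ g x) (hgmeas : Measurable g)
    (G : Measure (EuclideanSpace ℝ (Fin p))) [IsProbabilityMeasure G]
    (hG : G = σ.withDensity fun x => ENNReal.ofReal (g x))
    (prior : EuclideanSpace ℝ (Fin p) → ℝ)
    (hprior_meas : Measurable prior) (hprior0 : ∀ ζ, 0 ≤ prior ζ)
    (C : EuclideanSpace ℝ (Fin p) → ℝ)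
    (hC : ∀ ζ, C ζ = (∫ x, vmfDens σ ζ x ^ (1+γ) ∂σ) ^ (-(γ/(1+γ))))
    (Q : EuclideanSpace ℝ (Fin p) → Measure (EuclideanSpace ℝ (Fin p)) → ℝ)
    (hQ : ∀ ζ μ, Q ζ μ = (1/γ) * (∫ x, vmfDens σ ζ x ^ γ ∂μ) * C ζ)
    (k : EuclideanSpace ℝ (Fin p) → ℝ)
    (hk : ∀ ζ, k ζ = (1/γ)
        * (vmfDens σ ζ y ^ γ - ∫ x, vmfDens σ ζ x ^ γ * g x ∂σ) * C ζ)
    (F : ℝ → Measure (EuclideanSpace ℝ (Fin p)))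
    (hF : ∀ ε, F ε = ENNReal.ofReal (1-ε) • G + ENNReal.ofReal ε • Measure.dirac y)
    (Z : ℝ → ℝ)
    (hZ : ∀ ε, Z ε = ∫ ζ, Real.exp ((n : ℝ) * Q ζ (F ε)) * prior ζ)
    (N : ℝ → EuclideanSpace ℝ (Fin p))
    (hN : ∀ ε, N ε = ∫ ζ, (Real.exp ((n : ℝ) * Q ζ (F ε)) * prior ζ) • ζ)
    (T : ℝ → EuclideanSpace ℝ (Fin p))
    (hT : ∀ ε, T ε = (Z ε)⁻¹ • N ε)
    (hZ0 : 0 < Z 0)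
    (ε₀ : ℝ) (hε₀ : 0 < ε₀)
    (hdom : Integrable (fun ζ : EuclideanSpace ℝ (Fin p) =>
      (1 + ‖ζ‖) * (1 + (n : ℝ) * |k ζ|)
        * Real.exp ((n : ℝ) * Q ζ G + ε₀ * (n : ℝ) * |k ζ|) * prior ζ)) :
    HasDerivWithinAt T
      ((n : ℝ) • (((Z 0)⁻¹ •
          ∫ ζ, (Real.exp ((n : ℝ) * Q ζ G) * prior ζ * k ζ) • ζ)
        - ((Z 0)⁻¹ * ∫ ζ, Real.exp ((n : ℝ) * Q ζ G) * prior ζ * k ζ) •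
            ((Z 0)⁻¹ • ∫ ζ, (Real.exp ((n : ℝ) * Q ζ G) * prior ζ) • ζ)))
      (Set.Icc (0:ℝ) 1) 0 := by
  classical
  -- measurability of the basic objects
  have hinner : Continuous fun q : (EuclideanSpace ℝ (Fin p)) × (EuclideanSpace ℝ (Fin p)) =>
      Real.exp ⟪q.1, q.2⟫ := Real.continuous_exp.comp continuous_inner
  have hKm : Measurable (vmfK σ) := by
    have := (hinner.stronglyMeasurable.integral_prod_right' (ν := σ)).measurable
    exact this
  have hDm : Measurable fun q : (EuclideanSpace ℝ (Fin p)) × (EuclideanSpace ℝ (Fin p)) =>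
      vmfDens σ q.1 q.2 := by
    simp only [vmfDens]
    exact hinner.measurable.div (hKm.comp measurable_fst)
  have hIGm : Measurable fun ζ => ∫ x, vmfDens σ ζ x ^ γ ∂G := by
    have h : StronglyMeasurable fun q : (EuclideanSpace ℝ (Fin p)) × (EuclideanSpace ℝ (Fin p)) =>
        vmfDens σ q.1 q.2 ^ γ := (hDm.pow measurable_const).stronglyMeasurable
    exact (h.integral_prod_right' (ν := G)).measurable
  have hIgm : Measurable fun ζ => ∫ x, vmfDens σ ζ x ^ γ * g x ∂σ := by
    have h : StronglyMeasurable fun q : (EuclideanSpace ℝ (Fin p)) × (EuclideanSpace ℝ (Fin p)) =>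
        vmfDens σ q.1 q.2 ^ γ * g q.2 :=
      ((hDm.pow measurable_const).mul (hgmeas.comp measurable_snd)).stronglyMeasurable
    exact (h.integral_prod_right' (ν := σ)).measurable
  have hC1m : Measurable fun ζ => ∫ x, vmfDens σ ζ x ^ (1+γ) ∂σ := by
    have h : StronglyMeasurable fun q : (EuclideanSpace ℝ (Fin p)) × (EuclideanSpace ℝ (Fin p)) =>
        vmfDens σ q.1 q.2 ^ (1+γ) := (hDm.pow measurable_const).stronglyMeasurable
    exact (h.integral_prod_right' (ν := σ)).measurable
  have hCm : Measurable C := by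
    have h : Measurable fun ζ => (∫ x, vmfDens σ ζ x ^ (1+γ) ∂σ) ^ (-(γ/(1+γ))) :=
      hC1m.pow measurable_const
    exact (funext hC : C = _) ▸ h
  have hQGm : Measurable fun ζ => Q ζ G := by
    have h : Measurable fun ζ => (1/γ) * (∫ x, vmfDens σ ζ x ^ γ ∂G) * C ζ :=
      (measurable_const.mul hIGm).mul hCm
    exact (funext fun ζ => hQ ζ G : (fun ζ => Q ζ G) = _) ▸ h
  have hkym : Measurable fun ζ => vmfDens σ ζ y ^ γ := by
    have hc : Continuous fun ζ : EuclideanSpace ℝ (Fin p) => Real.exp ⟪ζ, y⟫ :=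
      Real.continuous_exp.comp (continuous_id.inner continuous_const)
    have h : Measurable fun ζ : EuclideanSpace ℝ (Fin p) => vmfDens σ ζ y := by
      simp only [vmfDens]; exact hc.measurable.div hKm
    exact h.pow measurable_const
  have hkm : Measurable k := by
    have h : Measurable fun ζ =>
        (1/γ) * (vmfDens σ ζ y ^ γ - ∫ x, vmfDens σ ζ x ^ γ * g x ∂σ) * C ζ :=
      (measurable_const.mul (hkym.sub hIgm)).mul hCm
    exact (funext hk : k = _) ▸ h
  -- a.e. facts and integrability of the density powers
  have hσ_sphere : ∀ᵐ x ∂σ, ‖x‖ = 1 := by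
    have hset : {x : EuclideanSpace ℝ (Fin p) | ¬ ‖x‖ = 1}
        = (sphere (0 : EuclideanSpace ℝ (Fin p)) 1)ᶜ := by
      ext x; simp [mem_sphere_zero_iff_norm]
    rw [ae_iff, hset]; exact hσ
  have hdb : ∀ ζ, ∀ᵐ x ∂σ, ‖vmfDens σ ζ x ^ γ‖ ≤ (Real.exp ‖ζ‖ / vmfK σ ζ) ^ γ := by
    intro ζ
    filter_upwards [hσ_sphere] with x hx
    have h0 : (0:ℝ) ≤ vmfDens σ ζ x := div_nonneg (Real.exp_pos _).le (hK ζ).le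
    rw [Real.norm_of_nonneg (Real.rpow_nonneg h0 _)]
    apply Real.rpow_le_rpow h0 _ hγ.le
    have hip : ⟪ζ, x⟫ ≤ ‖ζ‖ := by
      calc ⟪ζ, x⟫ ≤ ‖ζ‖ * ‖x‖ := real_inner_le_norm ζ x
        _ = ‖ζ‖ := by rw [hx, mul_one]
    unfold vmfDens
    gcongr
    exact (hK ζ).le

  have hmeasx : ∀ ζ, Measurable fun x => vmfDens σ ζ x ^ γ := by
    intro ζ
    have hc : Continuous fun x : EuclideanSpace ℝ (Fin p) => Real.exp ⟪ζ, x⟫ :=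
      Real.continuous_exp.comp (continuous_const.inner continuous_id)
    have h : Measurable fun x : EuclideanSpace ℝ (Fin p) => vmfDens σ ζ x := by
      simp only [vmfDens]; exact hc.measurable.div measurable_const
    exact h.pow measurable_const
  have hac : G ≪ σ := hG ▸ withDensity_absolutelyContinuous σ _
  have hIntG : ∀ ζ, Integrable (fun x => vmfDens σ ζ x ^ γ) G := fun ζ =>
    (integrable_const ((Real.exp ‖ζ‖ / vmfK σ ζ) ^ γ)).mono'
      ((hmeasx ζ).aestronglyMeasurable) (hac.ae_le (hdb ζ))
  have hIG_eq : ∀ ζ, ∫ x, vmfDens σ ζ x ^ γ ∂G = ∫ x, vmfDens σ ζ x ^ γ * g x ∂σ := by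
    intro ζ
    rw [hG]
    have hco : (fun x => ENNReal.ofReal (g x))
        = fun x => ((g x).toNNReal : ℝ≥0∞) := rfl
    rw [hco, integral_withDensity_eq_integral_smul hgmeas.real_toNNReal]
    congr 1
    funext x
    rw [NNReal.smul_def, Real.coe_toNNReal _ (hg0 x), smul_eq_mul, mul_comm]
  -- the key affine expansion of Q along the contamination path
  have hQF : ∀ ε ∈ Set.Icc (0:ℝ) 1, ∀ ζ, Q ζ (F ε) = Q ζ G + ε * k ζ := by
    rintro ε ⟨hε0, hε1⟩ ζ
    have h1 : Integrable (fun x => vmfDens σ ζ x ^ γ) (ENNReal.ofReal (1-ε) • G) :=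
      (hIntG ζ).smul_measure ENNReal.ofReal_ne_top
    have h2 : Integrable (fun x => vmfDens σ ζ x ^ γ) (ENNReal.ofReal ε • Measure.dirac y) :=
      (((integrable_const (vmfDens σ ζ y ^ γ)).congr
        (ae_eq_dirac fun x => vmfDens σ ζ x ^ γ).symm)).smul_measure ENNReal.ofReal_ne_top
    have hsplit : ∫ x, vmfDens σ ζ x ^ γ ∂(F ε)
        = (1-ε) * (∫ x, vmfDens σ ζ x ^ γ ∂G) + ε * vmfDens σ ζ y ^ γ := by
      rw [hF, integral_add_measure h1 h2, integral_smul_measure, integral_smul_measure,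
        integral_dirac, ENNReal.toReal_ofReal (by linarith : (0:ℝ) ≤ 1 - ε),
        ENNReal.toReal_ofReal hε0, smul_eq_mul, smul_eq_mul]
    rw [hQ, hQ, hk, hsplit, hIG_eq ζ]
    ring
  have hnq : ∀ ε ∈ Set.Icc (0:ℝ) 1, ∀ ζ,
      (n : ℝ) * Q ζ (F ε) = (n : ℝ) * Q ζ G + ε * ((n : ℝ) * k ζ) := by
    intro ε hε ζ; rw [hQF ε hε ζ]; ring
  have hZeq : ∀ ε ∈ Set.Icc (0:ℝ) 1,
      Z ε = ∫ ζ, Real.exp ((n : ℝ) * Q ζ G + ε * ((n : ℝ) * k ζ)) * prior ζ := by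
    intro ε hε; rw [hZ]; simp only [hnq ε hε]
  have hNeq : ∀ ε ∈ Set.Icc (0:ℝ) 1,
      N ε = ∫ ζ, (Real.exp ((n : ℝ) * Q ζ G + ε * ((n : ℝ) * k ζ)) * prior ζ) • ζ := by
    intro ε hε; rw [hN]; simp only [hnq ε hε]
  -- domination machinery
  have ha0 : ∀ ζ, (0:ℝ) ≤ (n : ℝ) * |k ζ| := fun ζ => by positivity
  have hmaster : ∀ ζ (c e : ℝ), 0 ≤ c →
      c ≤ (1 + ‖ζ‖) * (1 + (n : ℝ) * |k ζ|) → 0 ≤ e →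
      e ≤ Real.exp ((n : ℝ) * Q ζ G + ε₀ * (n : ℝ) * |k ζ|) →
      c * e * prior ζ ≤ (1 + ‖ζ‖) * (1 + (n : ℝ) * |k ζ|)
        * Real.exp ((n : ℝ) * Q ζ G + ε₀ * (n : ℝ) * |k ζ|) * prior ζ := by
    intro ζ c e hc0 hc he0 he
    have h1 : c * e ≤ ((1 + ‖ζ‖) * (1 + (n : ℝ) * |k ζ|))
        * Real.exp ((n : ℝ) * Q ζ G + ε₀ * (n : ℝ) * |k ζ|) := by
      apply mul_le_mul hc he he0
      positivity
    calc c * e * prior ζ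
        ≤ ((1 + ‖ζ‖) * (1 + (n : ℝ) * |k ζ|)
            * Real.exp ((n : ℝ) * Q ζ G + ε₀ * (n : ℝ) * |k ζ|)) * prior ζ := by
          have h2 : ((1 + ‖ζ‖) * (1 + (n : ℝ) * |k ζ|))
              * Real.exp ((n : ℝ) * Q ζ G + ε₀ * (n : ℝ) * |k ζ|)
              = (1 + ‖ζ‖) * (1 + (n : ℝ) * |k ζ|)
              * Real.exp ((n : ℝ) * Q ζ G + ε₀ * (n : ℝ) * |k ζ|) := by ring
          exact mul_le_mul_of_nonneg_right (h2 ▸ h1) (hprior0 ζ)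
      _ = _ := by ring
  have hc1 : ∀ ζ, (1:ℝ) ≤ (1 + ‖ζ‖) * (1 + (n : ℝ) * |k ζ|) := by
    intro ζ
    nlinarith [norm_nonneg ζ, ha0 ζ, mul_nonneg (norm_nonneg ζ) (ha0 ζ)]
  have hcz : ∀ ζ, ‖ζ‖ ≤ (1 + ‖ζ‖) * (1 + (n : ℝ) * |k ζ|) := by
    intro ζ
    nlinarith [norm_nonneg ζ, ha0 ζ, mul_nonneg (norm_nonneg ζ) (ha0 ζ)]
  have hca : ∀ ζ, (n : ℝ) * |k ζ| ≤ (1 + ‖ζ‖) * (1 + (n : ℝ) * |k ζ|) := by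
    intro ζ
    nlinarith [norm_nonneg ζ, ha0 ζ, mul_nonneg (norm_nonneg ζ) (ha0 ζ)]
  have hcza : ∀ ζ, (n : ℝ) * |k ζ| * ‖ζ‖ ≤ (1 + ‖ζ‖) * (1 + (n : ℝ) * |k ζ|) := by
    intro ζ
    nlinarith [norm_nonneg ζ, ha0 ζ, mul_nonneg (norm_nonneg ζ) (ha0 ζ)]
  have hexple : ∀ ζ, ∀ x ∈ ball (0:ℝ) ε₀,
      Real.exp ((n : ℝ) * Q ζ G + x * ((n : ℝ) * k ζ))
        ≤ Real.exp ((n : ℝ) * Q ζ G + ε₀ * (n : ℝ) * |k ζ|) := by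
    intro ζ x hx
    have hxε : |x| ≤ ε₀ := by
      have h := mem_ball.mp hx
      rw [Real.dist_eq, sub_zero] at h
      exact h.le
    apply Real.exp_le_exp.mpr
    have h : x * ((n : ℝ) * k ζ) ≤ ε₀ * (n : ℝ) * |k ζ| := by
      calc x * ((n : ℝ) * k ζ) ≤ |x * ((n : ℝ) * k ζ)| := le_abs_self _
        _ = |x| * ((n : ℝ) * |k ζ|) := by rw [abs_mul, abs_mul, Nat.abs_cast]
        _ ≤ ε₀ * ((n : ℝ) * |k ζ|) := mul_le_mul_of_nonneg_right hxε (ha0 ζ)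
        _ = ε₀ * (n : ℝ) * |k ζ| := by ring
    linarith
  -- derivative of the integrand in ε
  have hderiv : ∀ ζ, ∀ x : ℝ,
      HasDerivAt (fun ε' => Real.exp ((n : ℝ) * Q ζ G + ε' * ((n : ℝ) * k ζ)) * prior ζ)
        (Real.exp ((n : ℝ) * Q ζ G + x * ((n : ℝ) * k ζ)) * ((n : ℝ) * k ζ) * prior ζ) x := by
    intro ζ x
    have h1 : HasDerivAt (fun ε' : ℝ => (n : ℝ) * Q ζ G + ε' * ((n : ℝ) * k ζ))
        ((n : ℝ) * k ζ) x := by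
      simpa using ((hasDerivAt_id x).mul_const ((n : ℝ) * k ζ)).const_add ((n : ℝ) * Q ζ G)
    exact (h1.exp).mul_const (prior ζ)
  have hΦm : ∀ x : ℝ, Measurable fun ζ =>
      Real.exp ((n : ℝ) * Q ζ G + x * ((n : ℝ) * k ζ)) * prior ζ := fun x =>
    (((measurable_const.mul hQGm).add
      (measurable_const.mul (measurable_const.mul hkm))).exp).mul hprior_meas
  have hΦ'm : ∀ x : ℝ, Measurable fun ζ =>
      Real.exp ((n : ℝ) * Q ζ G + x * ((n : ℝ) * k ζ)) * ((n : ℝ) * k ζ) * prior ζ := fun x =>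
    ((((measurable_const.mul hQGm).add
      (measurable_const.mul (measurable_const.mul hkm))).exp).mul
        (measurable_const.mul hkm)).mul hprior_meas
  -- integrability at ε = 0
  have hF0int : Integrable (fun ζ =>
      Real.exp ((n : ℝ) * Q ζ G + (0:ℝ) * ((n : ℝ) * k ζ)) * prior ζ) := by
    refine hdom.mono' ((hΦm 0).aestronglyMeasurable) (Filter.Eventually.of_forall fun ζ => ?_)
    rw [Real.norm_of_nonneg (mul_nonneg (Real.exp_pos _).le (hprior0 ζ))]
    calc Real.exp ((n : ℝ) * Q ζ G + (0:ℝ) * ((n : ℝ) * k ζ)) * prior ζ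
        = 1 * Real.exp ((n : ℝ) * Q ζ G + (0:ℝ) * ((n : ℝ) * k ζ)) * prior ζ := by ring
      _ ≤ _ := hmaster ζ 1 _ zero_le_one (hc1 ζ) (Real.exp_pos _).le
          (hexple ζ 0 (mem_ball_self hε₀))
  have hF0intN : Integrable (fun ζ =>
      (Real.exp ((n : ℝ) * Q ζ G + (0:ℝ) * ((n : ℝ) * k ζ)) * prior ζ) • ζ) := by
    refine hdom.mono' (((hΦm 0).aestronglyMeasurable).smul aestronglyMeasurable_id)
      (Filter.Eventually.of_forall fun ζ => ?_)
    rw [norm_smul, Real.norm_of_nonneg (mul_nonneg (Real.exp_pos _).le (hprior0 ζ))]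
    calc Real.exp ((n : ℝ) * Q ζ G + (0:ℝ) * ((n : ℝ) * k ζ)) * prior ζ * ‖ζ‖
        = ‖ζ‖ * Real.exp ((n : ℝ) * Q ζ G + (0:ℝ) * ((n : ℝ) * k ζ)) * prior ζ := by ring
      _ ≤ _ := hmaster ζ ‖ζ‖ _ (norm_nonneg ζ) (hcz ζ) (Real.exp_pos _).le
          (hexple ζ 0 (mem_ball_self hε₀))
  -- derivative of Z̃ via dominated convergence
  obtain ⟨hZ'int, hZd⟩ := hasDerivAt_integral_of_dominated_loc_of_deriv_le
    (F := fun x ζ => Real.exp ((n : ℝ) * Q ζ G + x * ((n : ℝ) * k ζ)) * prior ζ)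
    (F' := fun x ζ => Real.exp ((n : ℝ) * Q ζ G + x * ((n : ℝ) * k ζ)) * ((n : ℝ) * k ζ) * prior ζ)
    (x₀ := (0:ℝ))
    (bound := fun ζ => (1 + ‖ζ‖) * (1 + (n : ℝ) * |k ζ|)
        * Real.exp ((n : ℝ) * Q ζ G + ε₀ * (n : ℝ) * |k ζ|) * prior ζ)
    (ball_mem_nhds _ hε₀)
    (Filter.Eventually.of_forall fun x => (hΦm x).aestronglyMeasurable)
    hF0int
    ((hΦ'm 0).aestronglyMeasurable)
    (Filter.Eventually.of_forall fun ζ => fun x hx => by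
      have h1 : ‖Real.exp ((n : ℝ) * Q ζ G + x * ((n : ℝ) * k ζ)) * ((n : ℝ) * k ζ) * prior ζ‖
          = ((n : ℝ) * |k ζ|) * Real.exp ((n : ℝ) * Q ζ G + x * ((n : ℝ) * k ζ)) * prior ζ := by
        rw [Real.norm_eq_abs, abs_mul, abs_mul, abs_mul, Nat.abs_cast,
          abs_of_nonneg (Real.exp_pos _).le, abs_of_nonneg (hprior0 ζ)]
        ring
      rw [h1]
      exact hmaster ζ _ _ (ha0 ζ) (hca ζ) (Real.exp_pos _).le (hexple ζ x hx))
    hdom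
    (Filter.Eventually.of_forall fun ζ => fun x _ => hderiv ζ x)
  -- derivative of Ñ via dominated convergence
  obtain ⟨hN'int, hNd⟩ := hasDerivAt_integral_of_dominated_loc_of_deriv_le
    (F := fun x ζ => (Real.exp ((n : ℝ) * Q ζ G + x * ((n : ℝ) * k ζ)) * prior ζ) • ζ)
    (F' := fun x ζ =>
      (Real.exp ((n : ℝ) * Q ζ G + x * ((n : ℝ) * k ζ)) * ((n : ℝ) * k ζ) * prior ζ) • ζ)
    (x₀ := (0:ℝ))
    (bound := fun ζ => (1 + ‖ζ‖) * (1 + (n : ℝ) * |k ζ|)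
        * Real.exp ((n : ℝ) * Q ζ G + ε₀ * (n : ℝ) * |k ζ|) * prior ζ)
    (ball_mem_nhds _ hε₀)
    (Filter.Eventually.of_forall fun x =>
      ((hΦm x).aestronglyMeasurable).smul aestronglyMeasurable_id)
    hF0intN
    (((hΦ'm 0).aestronglyMeasurable).smul aestronglyMeasurable_id)
    (Filter.Eventually.of_forall fun ζ => fun x hx => by
      have h1 : ‖(Real.exp ((n : ℝ) * Q ζ G + x * ((n : ℝ) * k ζ)) * ((n : ℝ) * k ζ) * prior ζ) • ζ‖
          = ((n : ℝ) * |k ζ| * ‖ζ‖) * Real.exp ((n : ℝ) * Q ζ G + x * ((n : ℝ) * k ζ)) * prior ζ := by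
        rw [norm_smul, Real.norm_eq_abs, abs_mul, abs_mul, abs_mul, Nat.abs_cast,
          abs_of_nonneg (Real.exp_pos _).le, abs_of_nonneg (hprior0 ζ)]
        ring
      rw [h1]
      exact hmaster ζ _ _ (by positivity) (hcza ζ) (Real.exp_pos _).le (hexple ζ x hx))
    hdom
    (Filter.Eventually.of_forall fun ζ => fun x _ => (hderiv ζ x).smul_const ζ)
  -- identify values at 0
  have h0mem : (0:ℝ) ∈ Set.Icc (0:ℝ) 1 := ⟨le_refl 0, zero_le_one⟩
  have hZ00 : (∫ ζ, Real.exp ((n : ℝ) * Q ζ G + (0:ℝ) * ((n : ℝ) * k ζ)) * prior ζ) = Z 0 :=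
    (hZeq 0 h0mem).symm
  have hZne : (∫ ζ, Real.exp ((n : ℝ) * Q ζ G + (0:ℝ) * ((n : ℝ) * k ζ)) * prior ζ) ≠ 0 := by
    rw [hZ00]; exact ne_of_gt hZ0
  -- combine into the derivative of the quotient
  have hTd := (hZd.inv hZne).smul hNd
  -- rewrite the derivative into the covariance form
  have hBval : (∫ ζ, Real.exp ((n : ℝ) * Q ζ G + (0:ℝ) * ((n : ℝ) * k ζ))
        * ((n : ℝ) * k ζ) * prior ζ)
      = (n : ℝ) * ∫ ζ, Real.exp ((n : ℝ) * Q ζ G) * prior ζ * k ζ := by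
    have h : ∀ ζ, Real.exp ((n : ℝ) * Q ζ G + (0:ℝ) * ((n : ℝ) * k ζ))
        * ((n : ℝ) * k ζ) * prior ζ
        = (n : ℝ) * (Real.exp ((n : ℝ) * Q ζ G) * prior ζ * k ζ) := by
      intro ζ; rw [zero_mul, add_zero]; ring
    simp only [h]
    exact integral_const_mul _ _
  have hAval : (∫ ζ, (Real.exp ((n : ℝ) * Q ζ G + (0:ℝ) * ((n : ℝ) * k ζ))
        * ((n : ℝ) * k ζ) * prior ζ) • ζ)
      = (n : ℝ) • ∫ ζ, (Real.exp ((n : ℝ) * Q ζ G) * prior ζ * k ζ) • ζ := by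
    have h : ∀ ζ, (Real.exp ((n : ℝ) * Q ζ G + (0:ℝ) * ((n : ℝ) * k ζ))
          * ((n : ℝ) * k ζ) * prior ζ) • ζ
        = (n : ℝ) • ((Real.exp ((n : ℝ) * Q ζ G) * prior ζ * k ζ) • ζ) := by
      intro ζ
      rw [smul_smul]
      congr 1
      rw [zero_mul, add_zero]; ring
    simp only [h]
    exact integral_smul _ _
  have hN00 : (∫ ζ, (Real.exp ((n : ℝ) * Q ζ G + (0:ℝ) * ((n : ℝ) * k ζ)) * prior ζ) • ζ)
      = ∫ ζ, (Real.exp ((n : ℝ) * Q ζ G) * prior ζ) • ζ := by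
    simp
  rw [hZ00, hBval, hAval, hN00] at hTd
  have hDeq : (Z 0)⁻¹ • ((n : ℝ) • ∫ ζ, (Real.exp ((n : ℝ) * Q ζ G) * prior ζ * k ζ) • ζ)
        + (-((n : ℝ) * ∫ ζ, Real.exp ((n : ℝ) * Q ζ G) * prior ζ * k ζ) / Z 0 ^ 2) •
          (∫ ζ, (Real.exp ((n : ℝ) * Q ζ G) * prior ζ) • ζ)
      = (n : ℝ) • (((Z 0)⁻¹ •
          ∫ ζ, (Real.exp ((n : ℝ) * Q ζ G) * prior ζ * k ζ) • ζ)
        - ((Z 0)⁻¹ * ∫ ζ, Real.exp ((n : ℝ) * Q ζ G) * prior ζ * k ζ) •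
            ((Z 0)⁻¹ • ∫ ζ, (Real.exp ((n : ℝ) * Q ζ G) * prior ζ) • ζ)) := by
    match_scalars <;> ring
  simp only [Pi.inv_apply] at hTd
  rw [hZ00] at hTd
  rw [hDeq] at hTd
  -- transfer to T on [0,1]
  refine (hTd.hasDerivWithinAt).congr ?_ ?_
  · intro ε hε
    rw [hT, hZeq ε hε, hNeq ε hε]; rfl
  · rw [hT, hZeq 0 h0mem, hNeq 0 h0mem]; rfl
end
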